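/- arXiv:2103.04187 — 5 statements merged into one kernel-verified Lean document; each statement's English description precedes it below -/
import Mathlib

section
/- Lemma 3.1 (triangular structure). For all multi-indices γ, β over I the following hold. (a) If the z^β-coefficient of D^(0)(z^γ) is nonzero, then [γ]+1 = [β] and Σ_{𝐦≠0} |𝐦|·γ(𝐦) = Σ_{𝐦≠0} |𝐦|·β(𝐦). (b) For every 𝐧 ∈ ℕ²∖{0}: if the z^β-coefficient of D^(𝐧)(z^γ) is nonzero, then [γ]+1 = [β] and Σ_{𝐦≠0} |𝐦|·γ(𝐦) = Σ_{𝐦≠0} |𝐦|·β(𝐦) + |𝐧|. (c) If the z^β-coefficient of ∂₁(z^γ) is nonzero, then [γ] = [β] and Σ_{𝐦≠0} |𝐦|·γ(𝐦) + |(1,0)| = Σ_{𝐦≠0} |𝐦|·β(𝐦); the symmetric statement holds for ∂₂ with |(0,1)| in place of |(1,0)|. -/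
open MvPolynomial

abbrev N2 : Type := {p : ℕ × ℕ // p ≠ (0, 0)}
abbrev Idx : Type := ℕ ⊕ N2
abbrev MIdx : Type := Idx →₀ ℕ
abbrev PS : Type := MvPowerSeries Idx ℝ

noncomputable section

/-- the weight `|𝐧| = w₁ n₁ + w₂ n₂` of `𝐧 ∈ ℕ²`. -/
def wt (w₁ w₂ : ℝ) (n : ℕ × ℕ) : ℝ := w₁ * n.1 + w₂ * n.2

/-- `[γ] = Σ_k k γ(k) − Σ_{𝐧≠0} γ(𝐧)`. -/
def brk (γ : MIdx) : ℤ :=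
  γ.sum fun i n =>
    match i with
    | Sum.inl k => (k : ℤ) * n
    | Sum.inr _ => -(n : ℤ)

/-- `Σ_{𝐦≠0} |𝐦| γ(𝐦)`. -/
def wsum (w₁ w₂ : ℝ) (γ : MIdx) : ℝ :=
  γ.sum fun i n =>
    match i with
    | Sum.inl _ => 0
    | Sum.inr m => wt w₁ w₂ m.1 * n

/-- the homogeneity `|γ| = α([γ]+1) + Σ_{𝐧≠0}|𝐧|γ(𝐧)`. -/
def homdeg (α w₁ w₂ : ℝ) (γ : MIdx) : ℝ := α * ((brk γ : ℝ) + 1) + wsum w₁ w₂ γ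

/-! ### operators on monomials (polynomial level) -/

/-- `D^(0) z^γ = Σ_k (k+1) γ(k) z^{γ - e_k + e_{k+1}}`. -/
def D0mono (γ : MIdx) : MvPolynomial Idx ℝ :=
  γ.sum fun i n =>
    match i with
    | Sum.inl k =>
        (((k + 1) * n : ℕ) : ℝ) •
          monomial (γ - Finsupp.single (Sum.inl k) 1 + Finsupp.single (Sum.inl (k + 1)) 1) 1
    | Sum.inr _ => 0

/-- `D^(𝐧) z^γ = ∂_{z_𝐧} z^γ` for `𝐧 ≠ 0`. -/
def DNmono (m : N2) (γ : MIdx) : MvPolynomial Idx ℝ :=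
  ((γ (Sum.inr m) : ℕ) : ℝ) • monomial (γ - Finsupp.single (Sum.inr m) 1) 1

/-- `D^(𝐧) z^γ` for arbitrary `𝐧 ∈ ℕ²`. -/
def Dmono (n : ℕ × ℕ) (γ : MIdx) : MvPolynomial Idx ℝ :=
  if h : n = (0, 0) then D0mono γ else DNmono ⟨n, h⟩ γ

lemma add10_ne (n : ℕ × ℕ) : n + (1, 0) ≠ (0, 0) := by
  intro h
  exact Nat.succ_ne_zero n.1 (congrArg Prod.fst h)

lemma add01_ne (n : ℕ × ℕ) : n + (0, 1) ≠ (0, 0) := by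
  intro h
  exact Nat.succ_ne_zero n.2 (congrArg Prod.snd h)

def v10 : N2 := ⟨(1, 0), by decide⟩
def v01 : N2 := ⟨(0, 1), by decide⟩

/-- `∂₁ z^γ = z_{(1,0)} D^(0) z^γ + Σ_{𝐧≠0} (n₁+1) z_{𝐧+(1,0)} ∂_{z_𝐧} z^γ`. -/
def d1mono (γ : MIdx) : MvPolynomial Idx ℝ :=
  X (Sum.inr v10) * D0mono γ +
    γ.sum fun i n =>
      match i with
      | Sum.inl _ => 0
      | Sum.inr m =>
          (((m.1.1 + 1) * n : ℕ) : ℝ) •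
            monomial
              (γ - Finsupp.single (Sum.inr m) 1 +
                Finsupp.single (Sum.inr ⟨m.1 + (1, 0), add10_ne m.1⟩) 1) 1

/-- `∂₂ z^γ`. -/
def d2mono (γ : MIdx) : MvPolynomial Idx ℝ :=
  X (Sum.inr v01) * D0mono γ +
    γ.sum fun i n =>
      match i with
      | Sum.inl _ => 0
      | Sum.inr m =>
          (((m.1.2 + 1) * n : ℕ) : ℝ) •
            monomial
              (γ - Finsupp.single (Sum.inr m) 1 +
                Finsupp.single (Sum.inr ⟨m.1 + (0, 1), add01_ne m.1⟩) 1) 1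

/-! ### operators on power series (coefficientwise) -/

/-- coefficient of `D^(0) f` at `β`. -/
def D0coeff (f : PS) (β : MIdx) : ℝ :=
  ∑ i ∈ β.support,
    match i with
    | Sum.inl (k + 1) =>
        (((k + 1) * (β (Sum.inl k) + 1) : ℕ) : ℝ) *
          MvPowerSeries.coeff
            (β + Finsupp.single (Sum.inl k) 1 - Finsupp.single (Sum.inl (k + 1)) 1) f
    | _ => 0

/-- `D^(0)` on power series. -/
def D0series (f : PS) : PS := D0coeff f

/-- `D^(𝐧) = ∂_{z_𝐧}` on power series, `𝐧 ≠ 0`. -/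
def DNseries (m : N2) (f : PS) : PS :=
  fun β => ((β (Sum.inr m) + 1 : ℕ) : ℝ) *
    MvPowerSeries.coeff (β + Finsupp.single (Sum.inr m) 1) f

/-- `D^(𝐧)` on power series for arbitrary `𝐧 ∈ ℕ²`. -/
def Dseries (n : ℕ × ℕ) (f : PS) : PS :=
  if h : n = (0, 0) then D0series f else DNseries ⟨n, h⟩ f

/-- coefficient of `∂₁ f` at `β`. -/
def d1coeff (f : PS) (β : MIdx) : ℝ :=
  (if 1 ≤ β (Sum.inr v10) then D0coeff f (β - Finsupp.single (Sum.inr v10) 1) else 0) +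
    ∑ i ∈ β.support,
      match i with
      | Sum.inl _ => 0
      | Sum.inr p =>
          if hp : ((p.1.1 - 1, p.1.2) : ℕ × ℕ) ≠ (0, 0) ∧ 1 ≤ p.1.1 then
            (p.1.1 : ℝ) *
              ((((β - Finsupp.single (Sum.inr p) 1 : MIdx) (Sum.inr ⟨(p.1.1 - 1, p.1.2), hp.1⟩) : ℕ) + 1 : ℕ) : ℝ) *
              MvPowerSeries.coeff
                (β - Finsupp.single (Sum.inr p) 1 +
                  Finsupp.single (Sum.inr ⟨(p.1.1 - 1, p.1.2), hp.1⟩) 1) f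
          else 0

/-- `∂₁` on power series. -/
def d1series (f : PS) : PS := d1coeff f

/-- coefficient of `∂₂ f` at `β`. -/
def d2coeff (f : PS) (β : MIdx) : ℝ :=
  (if 1 ≤ β (Sum.inr v01) then D0coeff f (β - Finsupp.single (Sum.inr v01) 1) else 0) +
    ∑ i ∈ β.support,
      match i with
      | Sum.inl _ => 0
      | Sum.inr p =>
          if hp : ((p.1.1, p.1.2 - 1) : ℕ × ℕ) ≠ (0, 0) ∧ 1 ≤ p.1.2 then
            (p.1.2 : ℝ) *
              ((((β - Finsupp.single (Sum.inr p) 1 : MIdx) (Sum.inr ⟨(p.1.1, p.1.2 - 1), hp.1⟩) : ℕ) + 1 : ℕ) : ℝ) *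
              MvPowerSeries.coeff
                (β - Finsupp.single (Sum.inr p) 1 +
                  Finsupp.single (Sum.inr ⟨(p.1.1, p.1.2 - 1), hp.1⟩) 1) f
          else 0

/-- `∂₂` on power series. -/
def d2series (f : PS) : PS := d2coeff f

/-- the operator `z^γ·D^(𝐧)` on power series. -/
def opOf (γ : MIdx) (n : ℕ × ℕ) (f : PS) : PS :=
  MvPowerSeries.monomial γ (1 : ℝ) * Dseries n f

/-- the dual model space `T̃*`. -/
def Ttilde : Set PS := {f | ∀ γ : MIdx, MvPowerSeries.coeff γ f ≠ 0 → 0 ≤ brk γ}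

/-- the dual model space `T*`. -/
def Tstar : Set PS :=
  {f | ∀ γ : MIdx, MvPowerSeries.coeff γ f ≠ 0 →
      0 ≤ brk γ ∨ ∃ m : N2, γ = Finsupp.single (Sum.inr m) 1}

/-! ### topology and the realization property -/

instance : TopologicalSpace PS := inferInstanceAs (TopologicalSpace ((Idx →₀ ℕ) → ℝ))

/-- `Γ` realizes the family `(π^(𝐧))_{𝐧∈ℕ²}`. -/
def Realizes (Γ : PS →ₐ[ℝ] PS) (π : ℕ × ℕ → PS) : Prop :=
  Continuous Γ ∧
    (∀ m : N2, Γ (MvPowerSeries.X (Sum.inr m)) = MvPowerSeries.X (Sum.inr m) + π m.1) ∧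
    (∀ k : ℕ, HasSum
      (fun l : ℕ => ((k + l).choose k : ℝ) • (π (0, 0) ^ l * MvPowerSeries.X (Sum.inl (k + l))))
      (Γ (MvPowerSeries.X (Sum.inl k))))

end

/-! Give `z_k` the bidegree `(k, 0)` and `z_𝐧` the bidegree `(-1, |𝐧|)`; the weight of `z^γ` is then
`([γ], Σ_{𝐦≠0} |𝐦| γ(𝐦))`. Each of `D^(0)`, `D^(𝐧)`, `∂₁`, `∂₂` sends `z^γ` to a combination of
monomials in which one variable has been exchanged for another, removed, or (in the term
`z_{(1,0)} D^(0)`) additionally multiplied in, so its image is weighted homogeneous and the bidegree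
moves by the fixed amount `(1, 0)`, `(1, -|𝐧|)`, `(0, |(1,0)|)`, `(0, |(0,1)|)` respectively. -/

open Finsupp (weight)

section Bigrading

variable (w₁ w₂ : ℝ)

def bigrading : Idx → ℤ × ℝ
  | Sum.inl k => (k, 0)
  | Sum.inr m => (-1, wt w₁ w₂ m.1)

lemma weight_bigrading (γ : MIdx) : weight (bigrading w₁ w₂) γ = (brk γ, wsum w₁ w₂ γ) := by
  simp only [Finsupp.weight_apply, brk, wsum, Finsupp.sum, Prod.ext_iff, Prod.fst_sum,
    Prod.snd_sum]
  constructor <;> refine Finset.sum_congr rfl fun i _ => ?_ <;> rcases i with k | m <;>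
    simp [bigrading, mul_comm]

lemma wt_add (a b : ℕ × ℕ) : wt w₁ w₂ (a + b) = wt w₁ w₂ a + wt w₁ w₂ b := by
  simp only [wt, Prod.fst_add, Prod.snd_add]; push_cast; ring

end Bigrading

section WeightedHomogeneous

variable {σ M R : Type*} [AddCommGroup M] [CommSemiring R] (w : σ → M)

lemma weight_tsub_single {γ : σ →₀ ℕ} {i : σ} (hi : γ i ≠ 0) :
    weight w (γ - Finsupp.single i 1) = weight w γ - w i := by
  rw [eq_sub_iff_add_eq, ← one_nsmul (w i), ← Finsupp.weight_single, ← map_add,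
    tsub_add_cancel_of_le (Finsupp.single_le_iff.mpr (Nat.one_le_iff_ne_zero.mpr hi))]

lemma isWeightedHomogeneous_smul_monomial_tsub_single {γ : σ →₀ ℕ} {i : σ} (c : R) (hi : γ i ≠ 0) :
    IsWeightedHomogeneous w (c • monomial (γ - Finsupp.single i 1) (1 : R)) (weight w γ - w i) := by
  rw [smul_monomial, smul_eq_mul, mul_one]
  exact isWeightedHomogeneous_monomial _ _ _ (weight_tsub_single w hi)

lemma isWeightedHomogeneous_smul_monomial_exchange {γ : σ →₀ ℕ} {i : σ} (j : σ) (c : R)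
    (hi : γ i ≠ 0) :
    IsWeightedHomogeneous w (c • monomial (γ - Finsupp.single i 1 + Finsupp.single j 1) (1 : R))
      (weight w γ + (w j - w i)) := by
  rw [smul_monomial, smul_eq_mul, mul_one]
  refine isWeightedHomogeneous_monomial _ _ _ ?_
  rw [map_add, weight_tsub_single w hi, Finsupp.weight_single, one_nsmul]
  abel

end WeightedHomogeneous

section Operators

variable (w₁ w₂ : ℝ) (γ : MIdx)

theorem isWeightedHomogeneous_D0mono :
    IsWeightedHomogeneous (bigrading w₁ w₂) (D0mono γ) (weight (bigrading w₁ w₂) γ + (1, 0)) := by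
  refine IsWeightedHomogeneous.sum _ _ _ fun i hi => ?_
  rcases i with k | m
  · have h := isWeightedHomogeneous_smul_monomial_exchange (bigrading w₁ w₂) (Sum.inl (k + 1))
      (((k + 1) * γ (Sum.inl k) : ℕ) : ℝ) (Finsupp.mem_support_iff.mp hi)
    rw [show bigrading w₁ w₂ (Sum.inl (k + 1)) - bigrading w₁ w₂ (Sum.inl k) = (1, 0) by
      simp [bigrading]] at h
    exact h
  · exact isWeightedHomogeneous_zero _ _ _

theorem isWeightedHomogeneous_DNmono (m : N2) :
    IsWeightedHomogeneous (bigrading w₁ w₂) (DNmono m γ)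
      (weight (bigrading w₁ w₂) γ + (1, -wt w₁ w₂ m.1)) := by
  by_cases hm : γ (Sum.inr m) = 0
  · simp [DNmono, hm, isWeightedHomogeneous_zero]
  · have h := isWeightedHomogeneous_smul_monomial_tsub_single (bigrading w₁ w₂)
      (γ (Sum.inr m) : ℝ) hm
    rwa [sub_eq_add_neg, show -bigrading w₁ w₂ (Sum.inr m) = (1, -wt w₁ w₂ m.1) by
      simp [bigrading]] at h

theorem isWeightedHomogeneous_X_mul_D0mono (v : N2) :
    IsWeightedHomogeneous (bigrading w₁ w₂) (X (Sum.inr v) * D0mono γ)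
      (weight (bigrading w₁ w₂) γ + (0, wt w₁ w₂ v.1)) := by
  have h := (isWeightedHomogeneous_X ℝ (bigrading w₁ w₂) (Sum.inr v)).mul
    (isWeightedHomogeneous_D0mono w₁ w₂ γ)
  rwa [add_left_comm, show bigrading w₁ w₂ (Sum.inr v) + (1, 0) = (0, wt w₁ w₂ v.1) by
    simp [bigrading]] at h

/-- The part `Σ_{𝐧≠0} (…) z_{𝐧+𝐞} ∂_{z_𝐧} z^γ` of `∂₁`, `∂₂`, for `𝐞 = (1,0)`, `(0,1)`. -/
theorem isWeightedHomogeneous_sum_shift (e : ℕ × ℕ) (he : ∀ n, n + e ≠ (0, 0))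
    (c : N2 → ℕ → ℕ) :
    IsWeightedHomogeneous (bigrading w₁ w₂)
      (γ.sum fun i n =>
        match i with
        | Sum.inl _ => 0
        | Sum.inr m =>
            ((c m n : ℕ) : ℝ) •
              monomial
                (γ - Finsupp.single (Sum.inr m) 1 + Finsupp.single (Sum.inr ⟨m.1 + e, he m.1⟩) 1)
                (1 : ℝ))
      (weight (bigrading w₁ w₂) γ + (0, wt w₁ w₂ e)) := by
  refine IsWeightedHomogeneous.sum _ _ _ fun i hi => ?_
  rcases i with k | m
  · exact isWeightedHomogeneous_zero _ _ _
  · have h := isWeightedHomogeneous_smul_monomial_exchange (bigrading w₁ w₂)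
      (Sum.inr ⟨m.1 + e, he m.1⟩) ((c m (γ (Sum.inr m)) : ℕ) : ℝ) (Finsupp.mem_support_iff.mp hi)
    rw [show bigrading w₁ w₂ (Sum.inr ⟨m.1 + e, he m.1⟩) - bigrading w₁ w₂ (Sum.inr m)
      = (0, wt w₁ w₂ e) by simp [bigrading, wt_add]] at h
    exact h

theorem isWeightedHomogeneous_d1mono :
    IsWeightedHomogeneous (bigrading w₁ w₂) (d1mono γ)
      (weight (bigrading w₁ w₂) γ + (0, wt w₁ w₂ (1, 0))) :=
  (isWeightedHomogeneous_X_mul_D0mono w₁ w₂ γ v10).add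
    (isWeightedHomogeneous_sum_shift w₁ w₂ γ (1, 0) add10_ne fun m n => (m.1.1 + 1) * n)

theorem isWeightedHomogeneous_d2mono :
    IsWeightedHomogeneous (bigrading w₁ w₂) (d2mono γ)
      (weight (bigrading w₁ w₂) γ + (0, wt w₁ w₂ (0, 1))) :=
  (isWeightedHomogeneous_X_mul_D0mono w₁ w₂ γ v01).add
    (isWeightedHomogeneous_sum_shift w₁ w₂ γ (0, 1) add01_ne fun m n => (m.1.2 + 1) * n)

lemma brk_wsum_eq_of_coeff_ne_zero {p : MvPolynomial Idx ℝ} {β : MIdx} {d : ℤ × ℝ}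
    (hp : IsWeightedHomogeneous (bigrading w₁ w₂) p (weight (bigrading w₁ w₂) γ + d))
    (hβ : MvPolynomial.coeff β p ≠ 0) :
    brk β = brk γ + d.1 ∧ wsum w₁ w₂ β = wsum w₁ w₂ γ + d.2 := by
  simpa only [weight_bigrading, Prod.ext_iff, Prod.fst_add, Prod.snd_add] using hp hβ

end Operators

theorem stmt0_general (w₁ w₂ : ℝ) (γ β : MIdx) :
    (MvPolynomial.coeff β (D0mono γ) ≠ 0 →
        brk γ + 1 = brk β ∧ wsum w₁ w₂ γ = wsum w₁ w₂ β) ∧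
    (∀ m : N2, MvPolynomial.coeff β (DNmono m γ) ≠ 0 →
        brk γ + 1 = brk β ∧ wsum w₁ w₂ γ = wsum w₁ w₂ β + wt w₁ w₂ m.1) ∧
    (MvPolynomial.coeff β (d1mono γ) ≠ 0 →
        brk γ = brk β ∧ wsum w₁ w₂ γ + wt w₁ w₂ (1, 0) = wsum w₁ w₂ β) ∧
    (MvPolynomial.coeff β (d2mono γ) ≠ 0 →
        brk γ = brk β ∧ wsum w₁ w₂ γ + wt w₁ w₂ (0, 1) = wsum w₁ w₂ β) := by
  refine ⟨fun h => ?_, fun m h => ?_, fun h => ?_, fun h => ?_⟩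
  · obtain ⟨hbrk, hwsum⟩ :=
      brk_wsum_eq_of_coeff_ne_zero w₁ w₂ γ (isWeightedHomogeneous_D0mono w₁ w₂ γ) h
    exact ⟨hbrk.symm, by simpa using hwsum.symm⟩
  · obtain ⟨hbrk, hwsum⟩ :=
      brk_wsum_eq_of_coeff_ne_zero w₁ w₂ γ (isWeightedHomogeneous_DNmono w₁ w₂ γ m) h
    exact ⟨hbrk.symm, by simp only at hwsum; linarith⟩
  · obtain ⟨hbrk, hwsum⟩ :=
      brk_wsum_eq_of_coeff_ne_zero w₁ w₂ γ (isWeightedHomogeneous_d1mono w₁ w₂ γ) h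
    exact ⟨by simpa using hbrk.symm, hwsum.symm⟩
  · obtain ⟨hbrk, hwsum⟩ :=
      brk_wsum_eq_of_coeff_ne_zero w₁ w₂ γ (isWeightedHomogeneous_d2mono w₁ w₂ γ) h
    exact ⟨by simpa using hbrk.symm, hwsum.symm⟩

/-- **Lemma 3.1** (triangular structure). -/
theorem stmt0 (w₁ w₂ : ℝ) (hw₁ : 0 < w₁) (hw₂ : 0 < w₂) (γ β : MIdx) :
    (MvPolynomial.coeff β (D0mono γ) ≠ 0 →
        brk γ + 1 = brk β ∧ wsum w₁ w₂ γ = wsum w₁ w₂ β) ∧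
    (∀ m : N2, MvPolynomial.coeff β (DNmono m γ) ≠ 0 →
        brk γ + 1 = brk β ∧ wsum w₁ w₂ γ = wsum w₁ w₂ β + wt w₁ w₂ m.1) ∧
    (MvPolynomial.coeff β (d1mono γ) ≠ 0 →
        brk γ = brk β ∧ wsum w₁ w₂ γ + wt w₁ w₂ (1, 0) = wsum w₁ w₂ β) ∧
    (MvPolynomial.coeff β (d2mono γ) ≠ 0 →
        brk γ = brk β ∧ wsum w₁ w₂ γ + wt w₁ w₂ (0, 1) = wsum w₁ w₂ β) :=
  stmt0_general w₁ w₂ γ β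
end

section
/- The shift transformations compose like addition in ℝ² (Proposition exp01, part v). For h = (h₁,h₂) ∈ ℝ², define π_h^(𝐧) ∈ R for each 𝐧 ∈ ℕ² to be the power series whose z^{e_𝐦}-coefficient equals binom(m₁,n₁)·binom(m₂,n₂)·h₁^{m₁−n₁}·h₂^{m₂−n₂} for every 𝐦 ∈ ℕ² with 𝐦 ≥ 𝐧 componentwise and 𝐦 ≠ 𝐧 (in particular 𝐦 ≠ 0), and all of whose other coefficients vanish. If Γ realizes (π_h^(𝐧))_{𝐧∈ℕ²} and Γ′ realizes (π_{h′}^(𝐧))_{𝐧∈ℕ²}, then Γ∘Γ′ realizes (π_{h+h′}^(𝐧))_{𝐧∈ℕ²}. -/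
/-!
Write `S_h(𝐧) := Σ_{𝐦 ≠ 0} binom(𝐦, 𝐧) h^{𝐦 - 𝐧} z_𝐦`, so that `π_h^(𝐧) = S_h(𝐧) - z_𝐧` (with
`z_0 := 0`) and `Γ(z_𝐦) = S_h(𝐦)`. Since `Γ` is continuous and linear, it maps the `z_𝐧`-linear
series `S_{h'}(𝐧)` to `Σ_𝐦 binom(𝐦, 𝐧) h'^{𝐦 - 𝐧} S_h(𝐦)`, and the Vandermonde identity
`Σ_𝐭 binom(𝐭, 𝐧) h'^{𝐭 - 𝐧} binom(𝐦, 𝐭) h^{𝐦 - 𝐭} = binom(𝐦, 𝐧) (h + h')^{𝐦 - 𝐧}` (Taylor shifts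
compose) gives `Γ(π_{h'}^(𝐧)) = π_{h+h'}^(𝐧) - π_h^(𝐧)`, which settles the `z_𝐧`.

For `z_k`, applying `Γ` to `Γ'(z_k) = Σ_l binom(k + l, k) (π_{h'}^(0))^l z_{k+l}` and expanding each
`Γ(z_{k+l})` gives a double series in which every coefficient receives only finitely many
contributions, because `g := Γ(π_{h'}^(0))` has no constant term. Regrouping it along antidiagonals
and using the binomial theorem turns it into `Σ_L binom(k + L, k) (g + π_h^(0))^L z_{k+L}`, and
`g + π_h^(0) = π_{h+h'}^(0)`.
-/

open MvPolynomial

/-- `(π_h^(𝐧))_𝐧` is the tilt family of the shift by `h ∈ ℝ²`. -/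
def IsShiftFamily (h : ℝ × ℝ) (π : ℕ × ℕ → PS) : Prop :=
  ∀ n : ℕ × ℕ,
    (∀ m : N2, n.1 ≤ m.1.1 → n.2 ≤ m.1.2 → m.1 ≠ n →
        MvPowerSeries.coeff (Finsupp.single (Sum.inr m) 1) (π n)
          = (m.1.1.choose n.1 : ℝ) * (m.1.2.choose n.2 : ℝ)
              * h.1 ^ (m.1.1 - n.1) * h.2 ^ (m.1.2 - n.2)) ∧
    (∀ γ : MIdx,
        (¬ ∃ m : N2, n.1 ≤ m.1.1 ∧ n.2 ≤ m.1.2 ∧ m.1 ≠ n ∧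
            γ = Finsupp.single (Sum.inr m) 1) →
        MvPowerSeries.coeff γ (π n) = 0)


def binomShift {R : Type*} [CommSemiring R] (x : R) (a b : ℕ) : R := b.choose a * x ^ (b - a)

section BinomShift
open Finset Polynomial
variable {R : Type*} [CommSemiring R]

lemma binomShift_eq_coeff (x : R) (a b : ℕ) :
    binomShift x a b = ((Polynomial.X + Polynomial.C x) ^ b).coeff a := by
  rw [coeff_X_add_C_pow, binomShift, mul_comm]

lemma binomShift_self (x : R) (a : ℕ) : binomShift x a a = 1 := by simp [binomShift]

lemma binomShift_of_lt (x : R) {a b : ℕ} (h : b < a) : binomShift x a b = 0 := by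
  simp [binomShift, Nat.choose_eq_zero_of_lt h]

lemma sum_binomShift_mul_binomShift (x y : R) (a b : ℕ) :
    ∑ t ∈ range (b + 1), binomShift y t b * binomShift x a t = binomShift (x + y) a b := by
  rw [binomShift_eq_coeff, ← taylor_X_pow, ← taylor_taylor,
    (taylor y (Polynomial.X ^ b)).as_sum_range' (b + 1)
      (by rw [natDegree_taylor]; exact Nat.lt_succ_of_le (natDegree_X_pow_le b)),
    map_sum, finsetSum_coeff]
  refine sum_congr rfl fun t _ => ?_
  rw [taylor_monomial, Polynomial.coeff_C_mul, taylor_X_pow, ← binomShift_eq_coeff,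
    ← binomShift_eq_coeff]

end BinomShift

def shiftCoeff {R : Type*} [CommSemiring R] (h : R × R) (n m : ℕ × ℕ) : R :=
  binomShift h.1 n.1 m.1 * binomShift h.2 n.2 m.2

section ShiftCoeff
open Finset
variable {R : Type*}

section CommSemiring
variable [CommSemiring R]

lemma shiftCoeff_self (h : R × R) (n : ℕ × ℕ) : shiftCoeff h n n = 1 := by
  simp [shiftCoeff, binomShift_self]

lemma shiftCoeff_of_not_le (h : R × R) {n m : ℕ × ℕ} (hnm : ¬ n ≤ m) :
    shiftCoeff h n m = 0 := by
  rw [Prod.le_def, not_and_or, not_le, not_le] at hnm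
  rcases hnm with hlt | hlt <;> simp [shiftCoeff, binomShift_of_lt _ hlt]

variable [TopologicalSpace R]

lemma hasSum_shiftCoeff_mul (h h' : R × R) (n m : ℕ × ℕ) :
    HasSum (fun t => shiftCoeff h' n t * shiftCoeff h t m) (shiftCoeff (h + h') n m) := by
  have hsupp : ∀ t ∉ range (m.1 + 1) ×ˢ range (m.2 + 1),
      shiftCoeff h' n t * shiftCoeff h t m = 0 := fun t ht => by
    rw [shiftCoeff_of_not_le h fun hle => ht (by simpa [Nat.lt_succ_iff, Prod.le_def] using hle),
      mul_zero]
  have hsum : shiftCoeff (h + h') n m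
      = ∑ t ∈ range (m.1 + 1) ×ˢ range (m.2 + 1), shiftCoeff h' n t * shiftCoeff h t m := by
    simp only [shiftCoeff, Prod.fst_add, Prod.snd_add, add_comm h.1, add_comm h.2,
      ← sum_binomShift_mul_binomShift, sum_mul_sum, sum_product]
    exact sum_congr rfl fun _ _ => sum_congr rfl fun _ _ => by ring
  rw [hsum]
  exact hasSum_sum_of_ne_finset_zero hsupp

end CommSemiring

variable [CommRing R] [TopologicalSpace R] [IsTopologicalAddGroup R]

lemma hasSum_shiftCoeff_mul_ne_zero (h h' : R × R) (n m : ℕ × ℕ) :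
    HasSum (fun t : N2 => shiftCoeff h' n t * shiftCoeff h t m)
      (shiftCoeff (h + h') n m - shiftCoeff h' n (0, 0) * shiftCoeff h (0, 0) m) := by
  classical
  have hsub : HasSum
      (fun t : N2 => if t.1 = (0, 0) then 0 else shiftCoeff h' n t * shiftCoeff h t m)
      (shiftCoeff (h + h') n m - shiftCoeff h' n (0, 0) * shiftCoeff h (0, 0) m) :=
    (hasSum_subtype_iff_of_support_subset (s := {t | t ≠ (0, 0)})
      (fun t ht => by by_contra h0; exact ht (if_pos (not_not.1 h0)))).2
      (hasSum_ite_sub_hasSum (hasSum_shiftCoeff_mul h h' n m) (0, 0))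
  exact hsub.congr_fun fun t => (if_neg t.2).symm

lemma hasSum_shiftCoeff_sub_mul (h h' : R × R) (n m : ℕ × ℕ) :
    HasSum (fun t : N2 => (shiftCoeff h' n t - if t.1 = n then 1 else 0) * shiftCoeff h t m)
      (shiftCoeff (h + h') n m - shiftCoeff h n m) := by
  have hdiag : HasSum (fun t : N2 => (if t.1 = n then 1 else 0) * shiftCoeff h t m)
      (if n = (0, 0) then 0 else shiftCoeff h n m) := by
    split_ifs with hn
    · convert hasSum_zero using 1
      ext t
      rw [if_neg (hn ▸ t.2), zero_mul]
    · convert hasSum_ite_eq (⟨n, hn⟩ : N2) (shiftCoeff h n m) using 1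
      ext t
      simp only [Subtype.ext_iff]
      split_ifs with ht <;> simp [ht]
  have hval : shiftCoeff (h + h') n m - shiftCoeff h' n (0, 0) * shiftCoeff h (0, 0) m
      - (if n = (0, 0) then 0 else shiftCoeff h n m)
      = shiftCoeff (h + h') n m - shiftCoeff h n m := by
    by_cases hn : n = (0, 0)
    · subst hn
      simp [shiftCoeff_self]
    · rw [if_neg hn, shiftCoeff_of_not_le h' (fun hle => hn (le_antisymm hle bot_le))]
      ring
  simpa only [hval, sub_mul] using (hasSum_shiftCoeff_mul_ne_zero h h' n m).sub hdiag

end ShiftCoeff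

instance : T3Space PS := inferInstanceAs (T3Space ((Idx →₀ ℕ) → ℝ))

instance : IsTopologicalRing PS := MvPowerSeries.WithPiTopology.instIsTopologicalRing Idx ℝ

local notation "𝐞" μ:max => (Finsupp.single (Sum.inr μ) 1 : MIdx)

open MvPowerSeries in
def linearInZ : Submodule ℝ PS where
  carrier := {f | ∀ γ : MIdx, (∀ μ : N2, γ ≠ 𝐞 μ) → coeff γ f = 0}
  add_mem' hf hg γ hγ := by rw [map_add, hf γ hγ, hg γ hγ, add_zero]
  zero_mem' γ _ := map_zero _
  smul_mem' c f hf γ hγ := by rw [MvPowerSeries.coeff_smul, hf γ hγ, mul_zero]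

section LinearInZ
open MvPowerSeries

lemma single_inr_inj {μ ν : N2} : 𝐞 μ = 𝐞 ν ↔ μ = ν :=
  (Finsupp.single_left_inj one_ne_zero).trans Sum.inr_injective.eq_iff

lemma constantCoeff_eq_zero_of_mem_linearInZ {f : PS} (hf : f ∈ linearInZ) :
    constantCoeff f = 0 :=
  hf 0 fun μ h0 => by simpa using congrArg (· (Sum.inr μ)) h0

lemma X_mem_linearInZ (μ : N2) : (X (Sum.inr μ) : PS) ∈ linearInZ := fun γ hγ => by
  rw [MvPowerSeries.coeff_X, if_neg (hγ μ)]

lemma hasSum_of_mem_linearInZ {ι : Type*} {F : ι → PS} {g : PS} (hF : ∀ i, F i ∈ linearInZ)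
    (hg : g ∈ linearInZ) (h : ∀ ν : N2, HasSum (fun i => coeff (𝐞 ν) (F i)) (coeff (𝐞 ν) g)) :
    HasSum F g := by
  refine WithPiTopology.hasSum_iff_hasSum_coeff.2 fun γ => ?_
  by_cases hγ : ∃ ν : N2, γ = 𝐞 ν
  · obtain ⟨ν, rfl⟩ := hγ
    exact h ν
  · push Not at hγ
    simpa only [hF _ γ hγ, hg γ hγ] using hasSum_zero

lemma hasSum_smul_X_of_mem_linearInZ {f : PS} (hf : f ∈ linearInZ) :
    HasSum (fun μ : N2 => coeff (𝐞 μ) f • (X (Sum.inr μ) : PS)) f := by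
  classical
  refine hasSum_of_mem_linearInZ (fun μ => linearInZ.smul_mem _ (X_mem_linearInZ μ)) hf
    fun ν => ?_
  convert hasSum_ite_eq ν (coeff (𝐞 ν) f) using 1
  ext μ
  by_cases hμν : μ = ν
  · simp [hμν]
  · simp [MvPowerSeries.coeff_X, single_inr_inj, hμν, Ne.symm hμν]

end LinearInZ

namespace IsShiftFamily
open MvPowerSeries
variable {h : ℝ × ℝ} {π : ℕ × ℕ → PS}

lemma mem_linearInZ (H : IsShiftFamily h π) (n : ℕ × ℕ) : π n ∈ linearInZ :=
  fun γ hγ => (H n).2 γ fun ⟨m, _, _, _, hm⟩ => hγ m hm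

lemma coeff_single (H : IsShiftFamily h π) (n : ℕ × ℕ) (μ : N2) :
    coeff (𝐞 μ) (π n) = shiftCoeff h n μ - if μ.1 = n then 1 else 0 := by
  by_cases hμ : n ≤ μ.1 ∧ μ.1 ≠ n
  · rw [(H n).1 μ hμ.1.1 hμ.1.2 hμ.2, if_neg hμ.2, sub_zero, shiftCoeff, binomShift,
      binomShift]
    ring
  · have hzero : coeff (𝐞 μ) (π n) = 0 := (H n).2 _ fun ⟨m, h₁, h₂, h₃, hm⟩ => by
      obtain rfl : μ = m := single_inr_inj.1 hm
      exact hμ ⟨⟨h₁, h₂⟩, h₃⟩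
    rcases not_and_or.1 hμ with hle | heq
    · rw [hzero, shiftCoeff_of_not_le h hle, if_neg (by rintro rfl; exact hle le_rfl), sub_zero]
    · rw [hzero, not_not.1 heq, shiftCoeff_self, if_pos rfl, sub_self]

lemma coeff_single_X_add (H : IsShiftFamily h π) (μ ν : N2) :
    coeff (𝐞 ν) ((X (Sum.inr μ) : PS) + π μ) = shiftCoeff h μ ν := by
  classical
  rw [map_add, H.coeff_single, MvPowerSeries.coeff_X]
  by_cases hμν : μ = ν
  · simp [hμν]
  · simp [single_inr_inj, Ne.symm hμν, ← Subtype.ext_iff]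

lemma X_add_mem_linearInZ (H : IsShiftFamily h π) (μ : N2) :
    (X (Sum.inr μ) : PS) + π μ ∈ linearInZ :=
  add_mem (X_mem_linearInZ μ) (H.mem_linearInZ μ)

end IsShiftFamily

theorem Realizes.apply_shiftFamily {Γ : PS →ₐ[ℝ] PS} {h h' : ℝ × ℝ} {π π' π'' : ℕ × ℕ → PS}
    (hΓ : Realizes Γ π) (H : IsShiftFamily h π) (H' : IsShiftFamily h' π')
    (H'' : IsShiftFamily (h + h') π'') (n : ℕ × ℕ) : Γ (π' n) = π'' n - π n := by
  have hmap := (hasSum_smul_X_of_mem_linearInZ (H'.mem_linearInZ n)).map Γ hΓ.1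
  simp only [Function.comp_def, map_smul, hΓ.2.1] at hmap
  refine hmap.unique (hasSum_of_mem_linearInZ
    (fun μ => linearInZ.smul_mem _ (H.X_add_mem_linearInZ μ))
    (sub_mem (H''.mem_linearInZ n) (H.mem_linearInZ n)) fun ν => ?_)
  simp only [MvPowerSeries.coeff_smul, H.coeff_single_X_add, H'.coeff_single, map_sub,
    H''.coeff_single, H.coeff_single, sub_sub_sub_cancel_right]
  exact hasSum_shiftCoeff_sub_mul h h' n ν

section ShiftTerm
open MvPowerSeries Finset

lemma coeff_pow_mul_eq_zero {σ R : Type*} [CommSemiring R] {g : MvPowerSeries σ R}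
    (hg : g.constantCoeff = 0) {l : ℕ} {d : σ →₀ ℕ} (hd : d.degree < l)
    (f : MvPowerSeries σ R) : coeff d (g ^ l * f) = 0 :=
  coeff_of_lt_order <| (Nat.cast_lt.2 hd).trans_le <|
    (le_order_pow_of_constantCoeff_eq_zero l hg).trans <| le_self_add.trans le_order_mul

lemma coeff_mul_X_eq_zero {σ R : Type*} [CommSemiring R] {d : σ →₀ ℕ} {s : σ} (hs : d s = 0)
    (f : MvPowerSeries σ R) : coeff d (f * MvPowerSeries.X s) = 0 := by
  classical
  rw [MvPowerSeries.X_def, MvPowerSeries.coeff_mul_monomial, if_neg]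
  intro hle
  simpa [hs] using hle s

noncomputable def shiftTerm (p : PS) (k l : ℕ) : PS :=
  ((k + l).choose k : ℝ) • (p ^ l * MvPowerSeries.X (Sum.inl (k + l)))

lemma sum_antidiagonal_shiftTerm (g p : PS) (k L : ℕ) :
    ∑ q ∈ antidiagonal L, ((k + q.1).choose k : ℝ) • (g ^ q.1 * shiftTerm p (k + q.1) q.2)
      = shiftTerm (g + p) k L := by
  rw [shiftTerm, (Commute.all g p).add_pow', sum_mul, smul_sum]
  refine sum_congr rfl fun ⟨l, j⟩ hq => ?_
  obtain rfl : l + j = L := mem_antidiagonal.1 hq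
  have hchoose : ((k + l).choose k * (k + l + j).choose (k + l) : ℝ)
      = (k + (l + j)).choose k * (l + j).choose l := by
    have := Nat.choose_mul (n := k + l + j) (k := k + l) (s := k) (by omega)
    rw [show k + l + j - k = l + j by omega, Nat.add_sub_cancel_left] at this
    rw [← add_assoc, mul_comm]
    exact_mod_cast this
  simp only [shiftTerm, ← Nat.cast_smul_eq_nsmul ℝ, mul_smul_comm, smul_mul_assoc, smul_smul,
    ← mul_assoc, hchoose, ← add_assoc]

lemma summable_pow_mul_shiftTerm {g : PS} (hg : g.constantCoeff = 0) (p : PS) (k : ℕ) :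
    Summable fun q : ℕ × ℕ =>
      ((k + q.1).choose k : ℝ) • (g ^ q.1 * shiftTerm p (k + q.1) q.2) := by
  refine WithPiTopology.summable_iff_summable_coeff.2 fun d => summable_of_hasFiniteSupport ?_
  have hfin : (Set.Iic d.degree ×ˢ (Sum.inl ⁻¹' (d.support : Set Idx))).Finite :=
    (Set.finite_Iic _).prod (d.support.finite_toSet.preimage Sum.inl_injective.injOn)
  have hinj : Function.Injective fun q : ℕ × ℕ => (q.1, k + q.1 + q.2) := fun q q' hqq' => by
    simp only [Prod.mk.injEq] at hqq'
    ext <;> omega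
  refine (hfin.preimage hinj.injOn).subset ?_
  rintro ⟨l, j⟩ hq
  change MvPowerSeries.coeff d (_ • (g ^ l * shiftTerm p (k + l) j)) ≠ 0 at hq
  refine ⟨?_, ?_⟩
  · by_contra hl
    exact hq (by rw [MvPowerSeries.coeff_smul, coeff_pow_mul_eq_zero hg (not_le.1 hl), mul_zero])
  · by_contra hs
    apply hq
    rw [shiftTerm, mul_smul_comm, ← mul_assoc, MvPowerSeries.coeff_smul,
      MvPowerSeries.coeff_smul, coeff_mul_X_eq_zero (Finsupp.notMem_support_iff.1 hs), mul_zero,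
      mul_zero]

theorem hasSum_shiftTerm_add {g p : PS} (hg : g.constantCoeff = 0) {Y : ℕ → PS}
    (hY : ∀ s, HasSum (shiftTerm p s) (Y s)) {k : ℕ} {a : PS}
    (ha : HasSum (fun l => ((k + l).choose k : ℝ) • (g ^ l * Y (k + l))) a) :
    HasSum (shiftTerm (g + p) k) a := by
  set w : ℕ × ℕ → PS :=
    fun q => ((k + q.1).choose k : ℝ) • (g ^ q.1 * shiftTerm p (k + q.1) q.2)
  have hw : HasSum w (∑' q, w q) := (summable_pow_mul_shiftTerm hg p k).hasSum
  obtain rfl := ha.unique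
    (hw.prod_fiberwise fun l => ((hY (k + l)).mul_left (g ^ l)).const_smul _)
  have hdiag := (HasAntidiagonal.sigmaAntidiagonalEquivProd.hasSum_iff.2 hw).sigma
    fun L => (antidiagonal L).hasSum w
  simp only [w, sum_antidiagonal_shiftTerm] at hdiag
  exact hdiag

end ShiftTerm

/-- **The shift transformations compose like addition in ℝ².** -/
theorem stmt10 (h h' : ℝ × ℝ) (πh πh' πhh' : ℕ × ℕ → PS)
    (H : IsShiftFamily h πh) (H' : IsShiftFamily h' πh')
    (Hsum : IsShiftFamily (h + h') πhh')
    (Γ Γ' : PS →ₐ[ℝ] PS) (hΓ : Realizes Γ πh) (hΓ' : Realizes Γ' πh') :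
    Realizes (Γ.comp Γ') πhh' := by
  have hπ := hΓ.apply_shiftFamily H H' Hsum
  refine ⟨hΓ.1.comp hΓ'.1, fun m => ?_, fun k => ?_⟩
  · rw [AlgHom.comp_apply, hΓ'.2.1, map_add, hΓ.2.1, hπ]
    abel
  · have hmap := (hΓ'.2.2 k).map Γ hΓ.1
    simp only [Function.comp_def, map_smul, map_mul, map_pow, hπ] at hmap
    have hg : (πhh' (0, 0) - πh (0, 0)).constantCoeff = 0 :=
      constantCoeff_eq_zero_of_mem_linearInZ (sub_mem (Hsum.mem_linearInZ _) (H.mem_linearInZ _))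
    have hsum := hasSum_shiftTerm_add hg hΓ.2.2 hmap
    rwa [sub_add_cancel] at hsum
end

section
/- Population condition for the canonical lift of a driven ODE (condition (ckh03)). Let ξ : ℝ → ℝ be any function and let Π assign to every multi-index β (a finitely supported function β : ℕ → ℕ) a function Π_β : ℝ → ℝ such that for every β: Π_β is differentiable on ℝ, Π_β(0) = 0, and for every x ∈ ℝ the derivative satisfies Π_β′(x) = ( Σ_{k∈ℕ} Σ_{(β₁,…,β_k)} Π_{β₁}(x)···Π_{β_k}(x) )·ξ(x), where the inner sum runs over ordered k-tuples of multi-indices with e_k + β₁ + ⋯ + β_k = β (a finite set; the empty product for k = 0 is 1, so the k = 0 term equals 1 exactly when β = e₀). Then for every multi-index β: if Π_β is not identically zero, then Σ_{k∈ℕ} (k−1)·β(k) = −1. -/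
/-!
Grade multi-indices by `|β| = Σ β(i)` and weigh them by `w(β) = Σ (i - 1) β(i)`. If
`e_k + β₁ + ⋯ + β_k = β` then `|βⱼ| < |β|` and `w(β) = (k - 1) + Σ w(βⱼ)`; in particular when
every `w(βⱼ) = -1` then `w(β) = -1` too. So, by strong induction on `|β|`, a component with
`w(β) ≠ -1` sees in each term of its right-hand side a factor that already vanishes; its
derivative is zero, and with `Π_β(0) = 0` the component vanishes identically.
-/

open Finsupp

lemma Finsupp.degree_lt_degree_single_add_sum {σ : Type*} {k : ℕ} (a : σ)
    (t : Fin k → σ →₀ ℕ) (j : Fin k) : degree (t j) < degree (single a 1 + ∑ i, t i) := by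
  rw [map_add, map_sum, degree_single]
  have := Finset.single_le_sum (f := fun i => degree (t i)) (by simp) (Finset.mem_univ j)
  omega

lemma exists_weight_ne_neg_one_of_single_add_sum {k : ℕ} {t : Fin k → ℕ →₀ ℕ}
    (h : weight (fun i : ℕ => (i : ℤ) - 1) (single k 1 + ∑ j, t j) ≠ -1) :
    ∃ j, weight (fun i : ℕ => (i : ℤ) - 1) (t j) ≠ -1 := by
  by_contra! hall
  apply h
  simp [weight_single, hall]
  ring

section Hierarchy

variable (ξ : ℝ → ℝ) (Pmap : (ℕ →₀ ℕ) → ℝ → ℝ)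
    (hdiff : ∀ β : ℕ →₀ ℕ, Differentiable ℝ (Pmap β))
    (hinit : ∀ β : ℕ →₀ ℕ, Pmap β 0 = 0)
    (hode : ∀ (β : ℕ →₀ ℕ) (x : ℝ),
      deriv (Pmap β) x =
        (∑ᶠ k : ℕ, ∑ᶠ t ∈ {t : Fin k → (ℕ →₀ ℕ) |
            Finsupp.single k 1 + ∑ j, t j = β}, ∏ j, Pmap (t j) x) * ξ x)

include hdiff hinit hode in
theorem eq_zero_of_weight_ne_neg_one (β : ℕ →₀ ℕ)
    (hβ : weight (fun i : ℕ => (i : ℤ) - 1) β ≠ -1) : Pmap β = 0 := by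
  have hderiv : ∀ x, deriv (Pmap β) x = 0 := fun x => by
    rw [hode β x, finsum_eq_zero_of_forall_eq_zero, zero_mul]
    refine fun k => finsum_mem_of_eqOn_zero fun t (ht : single k 1 + ∑ j, t j = β) => ?_
    obtain ⟨j, hj⟩ := exists_weight_ne_neg_one_of_single_add_sum (ht ▸ hβ)
    -- justifies the recursive call below (`termination_by degree β`)
    have hdec : degree (t j) < degree β := ht ▸ degree_lt_degree_single_add_sum k t j
    exact Finset.prod_eq_zero (Finset.mem_univ j)
      (congrFun (eq_zero_of_weight_ne_neg_one (t j) hj) x)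
  funext x
  simpa [hinit β] using is_const_of_deriv_eq_zero (hdiff β) hderiv x 0
termination_by degree β

end Hierarchy

/-- **Population condition for the canonical lift of a driven ODE** (condition (ckh03)).
If the hierarchy `Π_β' = (Σ_k Σ_{e_k+β₁+⋯+β_k=β} Π_{β₁}⋯Π_{β_k})·ξ`, `Π_β(0) = 0`
holds, then any non-vanishing component `Π_β` satisfies `Σ_k (k−1)β(k) = −1`. -/
theorem stmt12 (ξ : ℝ → ℝ) (Pmap : (ℕ →₀ ℕ) → ℝ → ℝ)
    (hdiff : ∀ β : ℕ →₀ ℕ, Differentiable ℝ (Pmap β))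
    (hinit : ∀ β : ℕ →₀ ℕ, Pmap β 0 = 0)
    (hode : ∀ (β : ℕ →₀ ℕ) (x : ℝ),
      deriv (Pmap β) x =
        (∑ᶠ k : ℕ, ∑ᶠ t ∈ {t : Fin k → (ℕ →₀ ℕ) |
            Finsupp.single k 1 + ∑ j, t j = β}, ∏ j, Pmap (t j) x) * ξ x)
    (β : ℕ →₀ ℕ) (hβ : Pmap β ≠ 0) :
    (∑ i ∈ β.support, ((i : ℤ) - 1) * (β i : ℤ)) = -1 := by
  by_contra h
  refine hβ (eq_zero_of_weight_ne_neg_one ξ Pmap hdiff hinit hode β ?_)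
  simpa [weight_apply, Finsupp.sum, mul_comm] using h
end

section
/- Transformation maps for renormalization (Lemma 6.5). Let E be the derivation of R₂ with E z_k^0 = (k+1) z_{k+1}^0 and E z_k^1 = (k+1) z_{k+1}^1, extended coefficientwise to power series (E is continuous). Let c ∈ R₂ be supported on monomials in the z^1-variables only (its z^γ-coefficient vanishes whenever γ(0,k) ≠ 0 for some k), and suppose M : R₂ → R₂ is a continuous ℝ-algebra homomorphism with M(z_k^0) = z_k^0 + (1/k!)·E^k(c) and M(z_k^1) = z_k^1 for all k ∈ ℕ. Then: (i) M∘E = E∘M; (ii) for all π₁, π₂ ∈ R₂, M(π₁·E(π₂)) = M(π₁)·E(M(π₂)); (iii) if M′ is a continuous ℝ-algebra homomorphism of the same form with parameter c′ (also supported on the z^1-variables), then (M∘M′)(z_k^0) = z_k^0 + (1/k!)·E^k(c+c′) and (M∘M′)(z_k^1) = z_k^1 for all k, i.e. M∘M′ is of the same form with parameter c + c′. -/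
abbrev I2 : Type := Fin 2 × ℕ
abbrev PS2 : Type := MvPowerSeries I2 ℝ

noncomputable section

/-- coefficient of `E f` at `β`, where `E z_k^i = (k+1) z_{k+1}^i` is extended as a
derivation, coefficientwise to power series. -/
def E2coeff (f : PS2) (β : I2 →₀ ℕ) : ℝ :=
  ∑ p ∈ β.support,
    match p with
    | (i, k + 1) =>
        (((k + 1) * ((β (i, k) : ℕ) + 1) : ℕ) : ℝ) *
          MvPowerSeries.coeff
            (β + Finsupp.single (i, k) 1 - Finsupp.single (i, k + 1) 1) f
    | (_, 0) => 0

/-- the derivation `E` with `E z_k^i = (k+1) z_{k+1}^i`, on power series. -/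
def E2 (f : PS2) : PS2 := E2coeff f

instance : TopologicalSpace PS2 := inferInstanceAs (TopologicalSpace ((I2 →₀ ℕ) → ℝ))

/-- `c` is supported on monomials in the `z^1`-variables only. -/
def OnlyZ1 (c : PS2) : Prop :=
  ∀ γ : I2 →₀ ℕ, (∃ k : ℕ, γ (0, k) ≠ 0) → MvPowerSeries.coeff γ c = 0

/-- `M` is the transformation map with parameter `c`:
`M z_k^0 = z_k^0 + (1/k!)·E^k c` and `M z_k^1 = z_k^1`. -/
def IsRenorm (M : PS2 →ₐ[ℝ] PS2) (c : PS2) : Prop :=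
  Continuous M ∧
    (∀ k : ℕ, M (MvPowerSeries.X ((0 : Fin 2), k))
        = MvPowerSeries.X ((0 : Fin 2), k) + ((k.factorial : ℝ))⁻¹ • E2^[k] c) ∧
    (∀ k : ℕ, M (MvPowerSeries.X ((1 : Fin 2), k)) = MvPowerSeries.X ((1 : Fin 2), k))

/-!
`E2` is the locally finite sum `∑_q (q.2 + 1) z_{q.1, q.2+1} ∂/∂z_q` of derivations, hence a
continuous derivation. For (i), `M ∘ E2` and `E2 ∘ M` are continuous linear maps obeying the same
`M`-twisted Leibniz rule and agreeing on the variables, so they agree on polynomials and, by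
density, everywhere; (ii) is (i) together with multiplicativity of `M`. For (iii), `M` fixes the
`z^1`-variables, hence by continuity every series in them, such as `c'`; since `M` commutes with
`E2` it also fixes `E2^[k] c'`, and `M (M' z_k^0) = M z_k^0 + (1/k!) E2^[k] c'`.
-/

open MvPowerSeries Finsupp

namespace Derivation

variable {ι R A : Type*} [CommSemiring R] [CommSemiring A] [Algebra R A] [TopologicalSpace A]
  [IsTopologicalSemiring A] [T2Space A] [ContinuousConstSMul R A]

def ofHasSum (D : ι → Derivation R A A) (E : A → A)
    (hE : ∀ a, HasSum (fun i ↦ D i a) (E a)) : Derivation R A A where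
  toFun := E
  map_add' a b := (hE (a + b)).unique <| by simpa only [map_add] using (hE a).add (hE b)
  map_smul' r a := (hE (r • a)).unique <| by
    simpa only [map_smul, RingHom.id_apply] using (hE a).const_smul r
  map_one_eq_zero' := (hE 1).unique <| by simpa only [map_one_eq_zero] using hasSum_zero
  leibniz' a b := by
    change E (a * b) = a * E b + b * E a
    refine (hE (a * b)).unique ?_
    simpa only [leibniz, smul_eq_mul] using ((hE b).mul_left a).add ((hE a).mul_left b)

end Derivation

namespace MvPowerSeries

variable {σ R : Type*} [CommSemiring R]

theorem coeff_X_mul_of_ne_zero {β : σ →₀ ℕ} {j : σ} (h : β j ≠ 0) (f : MvPowerSeries σ R) :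
    coeff β (X j * f) = coeff (β - single j 1) f := by
  rw [X_def, coeff_monomial_mul, if_pos (single_le_iff.2 (Nat.one_le_iff_ne_zero.2 h)), one_mul]

theorem coeff_X_mul_of_eq_zero {β : σ →₀ ℕ} {j : σ} (h : β j = 0) (f : MvPowerSeries σ R) :
    coeff β (X j * f) = 0 := by
  rw [X_def, coeff_monomial_mul, if_neg (by simp [single_le_iff, h])]

namespace WithPiTopology

open scoped MvPowerSeries.WithPiTopology

variable [TopologicalSpace R] [T2Space R]

theorem linearMap_ext_of_leibniz (φ : MvPowerSeries σ R → MvPowerSeries σ R)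
    {D₁ D₂ : MvPowerSeries σ R →ₗ[R] MvPowerSeries σ R} (hD₁ : Continuous D₁)
    (hD₂ : Continuous D₂) (h₁ : ∀ f g, D₁ (f * g) = φ f * D₁ g + φ g * D₁ f)
    (h₂ : ∀ f g, D₂ (f * g) = φ f * D₂ g + φ g * D₂ f) (hone : D₁ 1 = D₂ 1)
    (hX : ∀ i, D₁ (X i) = D₂ (X i)) : D₁ = D₂ := by
  have hpoly (p : MvPolynomial σ R) : D₁ p = D₂ p := by
    induction p using MvPolynomial.induction_on with
    | C a => rw [MvPolynomial.coe_C, ← mul_one (C a), ← smul_eq_C_mul, map_smul, map_smul, hone]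
    | add p q hp hq => rw [MvPolynomial.coe_add, map_add, map_add, hp, hq]
    | mul_X p i hp => rw [MvPolynomial.coe_mul, MvPolynomial.coe_X, h₁, h₂, hp, hX]
  exact LinearMap.coe_injective <| denseRange_toMvPowerSeries.equalizer hD₁ hD₂ (funext hpoly)

theorem algHom_apply_eq_self (φ : MvPowerSeries σ R →ₐ[R] MvPowerSeries σ R)
    (hφ : Continuous φ) {f : MvPowerSeries σ R}
    (hf : ∀ γ, coeff γ f ≠ 0 → ∀ i ∈ γ.support, φ (X i) = X i) : φ f = f := by
  have hmon (γ : σ →₀ ℕ) (hγ : ∀ i ∈ γ.support, φ (X i) = X i) (a : R) :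
      φ (monomial γ a) = monomial γ a := by
    induction γ using Finsupp.induction generalizing a with
    | zero => rw [monomial_zero_eq_C_apply, ← mul_one (C a), ← smul_eq_C_mul, map_smul, map_one]
    | single_add i n τ _ hn ih =>
      have hsub : τ.support ⊆ (single i n + τ).support := fun j hj ↦ by
        rw [mem_support_iff] at hj ⊢
        rw [Finsupp.add_apply]
        omega
      rw [← one_mul a, ← monomial_mul_monomial, ← X_pow_eq, map_mul, map_pow,
        hγ i (by simp [hn]), ih (fun j hj ↦ hγ j (hsub hj))]
  refine ((hasSum_of_monomials_self f).map φ hφ).unique ?_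
  convert hasSum_of_monomials_self f using 2 with γ
  by_cases h : coeff γ f = 0
  · simp [h]
  · exact hmon γ (hf γ h) _

end WithPiTopology

end MvPowerSeries

-- The topology on `PS2` is definitionally Mathlib's `MvPowerSeries.WithPiTopology`.
instance : IsTopologicalSemiring PS2 := MvPowerSeries.WithPiTopology.instIsTopologicalSemiring I2 ℝ

instance : T2Space PS2 := MvPowerSeries.WithPiTopology.instT2Space

def E2Summand (q : I2) : Derivation ℝ PS2 PS2 :=
  (q.2 + 1 : ℝ) • (X (q.1, q.2 + 1) : PS2) • pderiv ℝ q

theorem E2Summand_apply (q : I2) (f : PS2) :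
    E2Summand q f = (q.2 + 1 : ℝ) • (X (q.1, q.2 + 1) * pderiv ℝ q f) :=
  rfl

theorem hasSum_E2 (f : PS2) : HasSum (fun q ↦ E2Summand q f) (E2 f) := by
  refine WithPiTopology.hasSum_iff_hasSum_coeff.2 fun β ↦ ?_
  have hsucc : Function.Injective fun q : I2 ↦ ((q.1, q.2 + 1) : I2) := fun p q h ↦ by
    simp only [Prod.mk.injEq, Nat.add_right_cancel_iff] at h
    exact Prod.ext h.1 h.2
  have hzero : ∀ q ∉ β.support.preimage _ hsucc.injOn, coeff β (E2Summand q f) = 0 := by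
    intro q hq
    rw [Finset.mem_preimage, mem_support_iff, not_not] at hq
    rw [E2Summand_apply, map_smul, coeff_X_mul_of_eq_zero hq, smul_zero]
  suffices h : coeff β (E2 f) = ∑ q ∈ β.support.preimage _ hsucc.injOn, coeff β (E2Summand q f) by
    rw [h]
    exact hasSum_sum_of_ne_finset_zero hzero
  change E2coeff f β = _
  rw [E2coeff, ← Finset.sum_preimage _ _ hsucc.injOn]
  · refine Finset.sum_congr rfl fun ⟨i, k⟩ hq ↦ ?_
    rw [Finset.mem_preimage, mem_support_iff] at hq
    have hle : single (i, k + 1) 1 ≤ β := single_le_iff.2 (Nat.one_le_iff_ne_zero.2 hq)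
    rw [E2Summand_apply, map_smul, coeff_X_mul_of_ne_zero hq, coeff_pderiv,
      tsub_add_eq_add_tsub hle, tsub_apply, single_eq_of_ne (by simp), Nat.sub_zero, smul_eq_mul]
    push_cast
    ring
  · rintro ⟨i, _ | k⟩ _ hrange
    · rfl
    · exact absurd ⟨(i, k), rfl⟩ hrange

def E2Der : Derivation ℝ PS2 PS2 := Derivation.ofHasSum E2Summand E2 hasSum_E2

theorem E2Der_apply (f : PS2) : E2Der f = E2 f :=
  rfl

theorem E2_X (q : I2) : E2 (X q) = (q.2 + 1 : ℝ) • X (q.1, q.2 + 1) := by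
  refine (hasSum_E2 (X q)).unique ?_
  convert hasSum_single (f := fun p ↦ E2Summand p (X q)) q fun p hp ↦ by
    rw [E2Summand_apply, pderiv_X_of_ne hp.symm, mul_zero, smul_zero]
  rw [E2Summand_apply, pderiv_X_self, mul_one]

theorem continuous_E2 : Continuous E2 := by
  refine continuous_pi fun β ↦ ?_
  change Continuous fun f ↦ E2coeff f β
  refine continuous_finsetSum _ ?_
  rintro ⟨i, _ | k⟩ _
  · exact continuous_const
  · exact continuous_const.mul (continuous_apply _)

namespace IsRenorm

variable {M : PS2 →ₐ[ℝ] PS2} {c : PS2}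

theorem map_E2_X (hM : IsRenorm M c) (q : I2) : M (E2 (X q)) = E2 (M (X q)) := by
  obtain ⟨_, hM0, hM1⟩ := hM
  obtain ⟨i, k⟩ := q
  match i with
  | 0 =>
    rw [E2_X, map_smul, hM0 k, hM0 (k + 1), ← E2Der_apply, map_add, E2Der.map_smul, E2Der_apply,
      E2Der_apply, E2_X, ← Function.iterate_succ_apply' E2, smul_add, smul_smul,
      Nat.factorial_succ]
    congr 2
    push_cast
    field_simp
  | 1 => rw [E2_X, map_smul, hM1 k, hM1 (k + 1), E2_X]

theorem map_E2 (hM : IsRenorm M c) (f : PS2) : M (E2 f) = E2 (M f) := by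
  have h := WithPiTopology.linearMap_ext_of_leibniz M
    (D₁ := M.toLinearMap ∘ₗ E2Der.toLinearMap) (D₂ := E2Der.toLinearMap ∘ₗ M.toLinearMap)
    (hM.1.comp continuous_E2) (continuous_E2.comp hM.1)
    (fun f g ↦ by simp [Derivation.leibniz]) (fun f g ↦ by simp [Derivation.leibniz])
    (by simp) hM.map_E2_X
  exact LinearMap.congr_fun h f

theorem map_eq_self (hM : IsRenorm M c) {d : PS2} (hd : OnlyZ1 d) : M d = d := by
  refine WithPiTopology.algHom_apply_eq_self M hM.1 fun γ hγ ⟨i, k⟩ hik ↦ ?_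
  match i with
  | 0 => exact absurd (hd γ ⟨k, mem_support_iff.1 hik⟩) hγ
  | 1 => exact hM.2.2 k

theorem comp (hM : IsRenorm M c) {M' : PS2 →ₐ[ℝ] PS2} {c' : PS2} (hM' : IsRenorm M' c')
    (hc' : OnlyZ1 c') : IsRenorm (M.comp M') (c + c') := by
  refine ⟨hM.1.comp hM'.1, fun k ↦ ?_, fun k ↦ by rw [AlgHom.comp_apply, hM'.2.2 k, hM.2.2 k]⟩
  have hfix : M (E2^[k] c') = E2^[k] c' := by
    rw [Function.Commute.iterate_right hM.map_E2 k c', hM.map_eq_self hc']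
  have hadd : E2^[k] (c + c') = E2^[k] c + E2^[k] c' := iterate_map_add E2Der k c c'
  rw [AlgHom.comp_apply, hM'.2.1 k, map_add, map_smul, hM.2.1 k, hfix, hadd, smul_add, add_assoc]

end IsRenorm

theorem stmt13_general (c : PS2) (M : PS2 →ₐ[ℝ] PS2) (hM : IsRenorm M c) :
    (∀ f : PS2, M (E2 f) = E2 (M f)) ∧
    (∀ π₁ π₂ : PS2, M (π₁ * E2 π₂) = M π₁ * E2 (M π₂)) ∧
    (∀ c' : PS2, OnlyZ1 c' → ∀ M' : PS2 →ₐ[ℝ] PS2, IsRenorm M' c' →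
        IsRenorm (M.comp M') (c + c')) :=
  ⟨hM.map_E2, fun π₁ π₂ ↦ by rw [map_mul, hM.map_E2], fun _ hc' _ hM' ↦ hM.comp hM' hc'⟩

/-- **Transformation maps for renormalization** (Lemma 6.5). -/
theorem stmt13 (c : PS2) (hc : OnlyZ1 c) (M : PS2 →ₐ[ℝ] PS2) (hM : IsRenorm M c) :
    (∀ f : PS2, M (E2 f) = E2 (M f)) ∧
    (∀ π₁ π₂ : PS2, M (π₁ * E2 π₂) = M π₁ * E2 (M π₂)) ∧
    (∀ c' : PS2, OnlyZ1 c' → ∀ M' : PS2 →ₐ[ℝ] PS2, IsRenorm M' c' →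
        IsRenorm (M.comp M') (c + c')) :=
  stmt13_general c M hM

end
end

section
/- Summation identity for multi-index decompositions (Appendix Lemma A.1). Let ι be a type, V and W real vector spaces, A : (ι →₀ ℕ) → V and B : (ι →₀ ℕ) → W arbitrary families, J a multi-index over ι, and i ∈ ι. Then in V ⊗_ℝ W: (J(i)+1) · Σ_{J′+J″ = J+e_i} (1/J′!)·A(J′) ⊗ (1/J″!)·B(J″) = Σ_{J′+J″ = J} [ (1/J′!)·A(J′+e_i) ⊗ (1/J″!)·B(J″) + (1/J′!)·A(J′) ⊗ (1/J″!)·B(J″+e_i) ], where both sums run over the (finite) sets of ordered pairs of multi-indices (J′,J″) summing to the indicated multi-index. -/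
/-! On the antidiagonal of `J + eᵢ` the weight `J i + 1` splits as `J' i + J'' i`. In the
`J' i` half the terms with `J' i = 0` vanish, the others are indexed by `J' = K + eᵢ` with
`K + J'' = J`, and `(K i + 1) / (K + eᵢ)! = 1 / K!`; symmetrically for the `J'' i` half. -/

open scoped TensorProduct

/-- the factorial `J! = Π_j J(j)!` of a multi-index. -/
def mfact {ι : Type*} (J : ι →₀ ℕ) : ℕ := J.prod fun _ n => n.factorial

namespace Finset.HasAntidiagonal

theorem sum_antidiagonal_add_eq_sum_add_fst {A M : Type*} [AddCommMonoid A] [IsRightCancelAdd A]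
    [PartialOrder A] [CanonicallyOrderedAdd A] [HasAntidiagonal A] [AddCommMonoid M]
    (n e : A) (f : A × A → M) (hf : ∀ p ∈ antidiagonal (n + e), ¬ e ≤ p.1 → f p = 0) :
    ∑ p ∈ antidiagonal (n + e), f p = ∑ q ∈ antidiagonal n, f (q.1 + e, q.2) := by
  symm
  refine sum_of_injOn (fun q => (q.1 + e, q.2)) ?_ ?_ ?_ fun _ _ => rfl
  · rintro ⟨a, b⟩ - ⟨c, d⟩ - h
    simp only [Prod.mk.injEq, add_left_inj] at h
    simp [h]
  · rintro ⟨a, b⟩ h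
    simp only [mem_coe, HasAntidiagonal.mem_antidiagonal] at h ⊢
    rw [add_right_comm, h]
  · rintro ⟨a, b⟩ hp hnot
    refine hf _ hp fun hle => hnot ?_
    obtain ⟨c, rfl⟩ := exists_add_of_le hle
    rw [HasAntidiagonal.mem_antidiagonal, add_comm e, add_right_comm, add_left_inj] at hp
    exact ⟨(c, b), by simpa using hp, by simp [add_comm]⟩

theorem sum_antidiagonal_add_eq_sum_add_snd {A M : Type*} [AddCommMonoid A] [IsRightCancelAdd A]
    [PartialOrder A] [CanonicallyOrderedAdd A] [HasAntidiagonal A] [AddCommMonoid M]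
    (n e : A) (f : A × A → M) (hf : ∀ p ∈ antidiagonal (n + e), ¬ e ≤ p.2 → f p = 0) :
    ∑ p ∈ antidiagonal (n + e), f p = ∑ q ∈ antidiagonal n, f (q.1, q.2 + e) := by
  rw [← map_swap_antidiagonal, sum_map, ← map_swap_antidiagonal (n := n), sum_map]
  exact sum_antidiagonal_add_eq_sum_add_fst n e _ fun p hp =>
    hf p.swap (swap_mem_antidiagonal.2 hp)

end Finset.HasAntidiagonal

theorem mfact_add_single_one {ι : Type*} (K : ι →₀ ℕ) (i : ι) :
    mfact (K + Finsupp.single i 1) = (K i + 1) * mfact K := by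
  have hK := Finsupp.mul_prod_erase' K i (fun _ n => n.factorial) fun _ => rfl
  have hK1 := Finsupp.mul_prod_erase' (K + Finsupp.single i 1) i (fun _ n => n.factorial)
    fun _ => rfl
  rw [Finsupp.erase_add, Finsupp.erase_single, add_zero] at hK1
  rw [mfact, mfact, ← hK, ← hK1]
  simp [Nat.factorial_succ, mul_assoc]

theorem mfact_ne_zero {ι : Type*} (K : ι →₀ ℕ) : mfact K ≠ 0 :=
  Finset.prod_ne_zero_iff.2 fun _ _ => Nat.factorial_ne_zero _

theorem apply_mul_one_div_mfact_add_single_one {ι : Type*} (K : ι →₀ ℕ) (i : ι) :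
    ((K + Finsupp.single i 1 : ι →₀ ℕ) i : ℝ) * (1 / mfact (K + Finsupp.single i 1)) =
      1 / mfact K := by
  have := mfact_ne_zero K
  rw [mfact_add_single_one]
  push_cast
  field_simp
  simp

/-- **Summation identity for multi-index decompositions** (Appendix Lemma A.1). -/
theorem stmt14 {ι V W : Type*} [DecidableEq ι] [AddCommGroup V] [Module ℝ V]
    [AddCommGroup W] [Module ℝ W]
    (A : (ι →₀ ℕ) → V) (B : (ι →₀ ℕ) → W) (J : ι →₀ ℕ) (i : ι) :
    (((J i : ℕ) + 1 : ℕ) : ℝ) •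
        ∑ p ∈ Finset.HasAntidiagonal.antidiagonal (J + Finsupp.single i 1),
          ((1 / (mfact p.1 : ℝ)) • A p.1) ⊗ₜ[ℝ] ((1 / (mfact p.2 : ℝ)) • B p.2)
      = ∑ p ∈ Finset.HasAntidiagonal.antidiagonal J,
          (((1 / (mfact p.1 : ℝ)) • A (p.1 + Finsupp.single i 1)) ⊗ₜ[ℝ]
              ((1 / (mfact p.2 : ℝ)) • B p.2)
            + ((1 / (mfact p.1 : ℝ)) • A p.1) ⊗ₜ[ℝ]
              ((1 / (mfact p.2 : ℝ)) • B (p.2 + Finsupp.single i 1))) := by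
  set f : (ι →₀ ℕ) × (ι →₀ ℕ) → V ⊗[ℝ] W := fun p =>
    ((1 / (mfact p.1 : ℝ)) • A p.1) ⊗ₜ[ℝ] ((1 / (mfact p.2 : ℝ)) • B p.2)
  have split : ∀ p ∈ Finset.HasAntidiagonal.antidiagonal (J + Finsupp.single i 1),
      (((J i : ℕ) + 1 : ℕ) : ℝ) • f p = (p.1 i : ℝ) • f p + (p.2 i : ℝ) • f p := by
    intro p hp
    have hi := DFunLike.congr_fun (Finset.HasAntidiagonal.mem_antidiagonal.1 hp) i
    simp only [Finsupp.coe_add, Pi.add_apply, Finsupp.single_eq_same] at hi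
    rw [← add_smul, ← Nat.cast_add, hi]
  have vanish : ∀ K : ι →₀ ℕ, ¬ Finsupp.single i 1 ≤ K → (K i : ℝ) = 0 := fun K hK => by
    rw [Finsupp.single_le_iff, not_le, Nat.lt_one_iff] at hK
    simp [hK]
  rw [Finset.smul_sum, Finset.sum_congr rfl split, Finset.sum_add_distrib,
    Finset.HasAntidiagonal.sum_antidiagonal_add_eq_sum_add_fst J _ (fun p => (p.1 i : ℝ) • f p)
      fun p _ hp => by rw [vanish p.1 hp, zero_smul],
    Finset.HasAntidiagonal.sum_antidiagonal_add_eq_sum_add_snd J _ (fun p => (p.2 i : ℝ) • f p)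
      fun p _ hp => by rw [vanish p.2 hp, zero_smul],
    ← Finset.sum_add_distrib]
  refine Finset.sum_congr rfl fun q _ => ?_
  congr 1
  · rw [TensorProduct.smul_tmul', smul_smul, apply_mul_one_div_mfact_add_single_one]
  · rw [← TensorProduct.tmul_smul, smul_smul, apply_mul_one_div_mfact_add_single_one]
end
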